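/- Let n ∈ ℕ and define H(s;θ) = ∫_0^{−θ} exp(πi(n+2)(s+t))·G_n(s+t) dt. For all real θ, s with 0 ≤ θ < s ≤ 1/2, one has |Re H(s;θ)| ≤ θ/2 + (1/(4(2n+3)))·(1/2 + 1/π)·( 1/s + 1/(s−θ) ). -/

import Mathlib

open scoped Classical

/-- `G_n(x) = sin((n+1)πx)/sin(πx)` for `x ∉ ℤ`, continuously extended by `G_n(x) = n+1`
for `x ∈ ℤ`. -/
noncomputable def G (n : ℕ) (x : ℝ) : ℝ :=
  if ∃ m : ℤ, x = (m : ℝ) then (n : ℝ) + 1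
  else Real.sin (((n : ℝ) + 1) * Real.pi * x) / Real.sin (Real.pi * x)

/-- `H(s;θ) = ∫_0^{−θ} e^{πi(n+2)(s+t)} G_n(s+t) dt`. -/
noncomputable def Hfun (n : ℕ) (s θ : ℝ) : ℂ :=
  ∫ t in (0 : ℝ)..(-θ),
    Complex.exp ((Real.pi : ℂ) * Complex.I * ((n : ℂ) + 2) * ((s : ℂ) + (t : ℂ))) *
      Complex.ofReal (G n (s + t))

/-! On `[s - θ, s] ⊂ (0, 1/2]` product-to-sum turns `Re (e^{πi(n+2)x} G_n(x))` into
`sin((2n+3)πx) / (2 sin πx) - 1/2`, so `Re H = θ/2 - ∫_{s-θ}^{s} sin((2n+3)πx) / (2 sin πx) dx`.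
The weight `1 / (2 sin πx)` is positive and decreasing there, so integrating by parts against
`-cos((2n+3)πx) / ((2n+3)π)` bounds the oscillatory integral by twice its value at `s - θ`
divided by `(2n+3)π`, and `sin πx ≥ 2x` finishes. -/

open Real Set intervalIntegral MeasureTheory

lemma two_mul_le_sin_pi_mul {x : ℝ} (hx0 : 0 ≤ x) (hx : x ≤ 1 / 2) : 2 * x ≤ sin (π * x) := by
  have h := mul_le_sin (x := π * x) (by positivity) (by nlinarith [pi_pos])
  rwa [← mul_assoc, div_mul_cancel₀ _ pi_ne_zero] at h

lemma sin_pi_mul_pos {x : ℝ} (hx0 : 0 < x) (hx1 : x < 1) : 0 < sin (π * x) :=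
  sin_pos_of_pos_of_lt_pi (by positivity) (by nlinarith [pi_pos])

lemma abs_integral_mul_deriv_le {g g' v v' : ℝ → ℝ} {a b M : ℝ} (hab : a ≤ b)
    (hg : ∀ x ∈ Icc a b, HasDerivAt g (g' x) x) (hv : ∀ x ∈ Icc a b, HasDerivAt v (v' x) x)
    (hg' : IntervalIntegrable g' volume a b) (hv' : IntervalIntegrable v' volume a b)
    (hM : ∀ x ∈ Icc a b, |v x| ≤ M) :
    |∫ x in a..b, g x * v' x| ≤ M * (|g a| + |g b| + ∫ x in a..b, |g' x|) := by
  rw [← uIcc_of_le hab] at hg hv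
  have hvcont : ContinuousOn v (uIcc a b) := fun x hx => (hv x hx).continuousAt.continuousWithinAt
  have hrest : |∫ x in a..b, g' x * v x| ≤ M * ∫ x in a..b, |g' x| := by
    calc |∫ x in a..b, g' x * v x| ≤ ∫ x in a..b, |g' x * v x| :=
          abs_integral_le_integral_abs hab
      _ ≤ ∫ x in a..b, M * |g' x| := by
          refine integral_mono_on hab (hg'.mul_continuousOn hvcont).abs (hg'.abs.const_mul M) ?_
          intro x hx
          rw [abs_mul, mul_comm M]
          exact mul_le_mul_of_nonneg_left (hM x hx) (abs_nonneg _)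
      _ = M * ∫ x in a..b, |g' x| := integral_const_mul _ _
  rw [integral_mul_deriv_eq_deriv_mul hg hv hg' hv']
  have hb := hM b ⟨hab, le_rfl⟩
  have ha := hM a ⟨le_rfl, hab⟩
  calc |g b * v b - g a * v a - ∫ x in a..b, g' x * v x|
      ≤ |g b| * |v b| + |g a| * |v a| + |∫ x in a..b, g' x * v x| := by
        rw [← abs_mul, ← abs_mul]
        exact (abs_sub _ _).trans (by gcongr; exact abs_sub _ _)
    _ ≤ |g b| * M + |g a| * M + M * ∫ x in a..b, |g' x| := by gcongr
    _ = M * (|g a| + |g b| + ∫ x in a..b, |g' x|) := by ring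

lemma abs_integral_mul_sin_le {g g' : ℝ → ℝ} {a b c : ℝ} (hab : a ≤ b) (hc : 0 < c)
    (hg : ∀ x ∈ Icc a b, HasDerivAt g (g' x) x) (hg' : IntervalIntegrable g' volume a b)
    (hg'_nonpos : ∀ x ∈ Icc a b, g' x ≤ 0) (hgb : 0 ≤ g b) :
    |∫ x in a..b, g x * sin (c * x)| ≤ 2 * g a / c := by
  have hv : ∀ x ∈ Icc a b, HasDerivAt (fun y => -cos (c * y) / c) (sin (c * x)) x := by
    intro x _
    have hlin : HasDerivAt (fun y => c * y) c x := by simpa using (hasDerivAt_id x).const_mul c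
    exact (hlin.cos.neg.div_const c).congr_deriv (by field_simp)
  have hM : ∀ x ∈ Icc a b, |-cos (c * x) / c| ≤ 1 / c := fun x _ => by
    rw [abs_div, abs_neg, abs_of_pos hc]
    gcongr
    exact abs_cos_le_one _
  have hvar : ∫ x in a..b, |g' x| = g a - g b := by
    rw [← uIcc_of_le hab] at hg
    calc ∫ x in a..b, |g' x| = ∫ x in a..b, -g' x :=
          integral_congr fun x hx => abs_of_nonpos (hg'_nonpos x (by rwa [← uIcc_of_le hab]))
      _ = g a - g b := by
          rw [intervalIntegral.integral_neg, integral_eq_sub_of_hasDerivAt hg hg', neg_sub]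
  have hga : g b ≤ g a := by
    have : 0 ≤ ∫ x in a..b, |g' x| := integral_nonneg hab fun x _ => abs_nonneg (g' x)
    linarith
  calc |∫ x in a..b, g x * sin (c * x)| ≤ 1 / c * (|g a| + |g b| + ∫ x in a..b, |g' x|) :=
        abs_integral_mul_deriv_le hab hg hv hg'
          ((continuous_sin.comp (continuous_const.mul continuous_id)).intervalIntegrable _ _) hM
    _ = 2 * g a / c := by
        rw [hvar, abs_of_nonneg hgb, abs_of_nonneg (hgb.trans hga)]
        ring

lemma abs_integral_sin_div_sin_pi_mul_le {a b c : ℝ} (ha : 0 < a) (hab : a ≤ b) (hb : b ≤ 1 / 2)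
    (hc : 0 < c) : |∫ x in a..b, sin (c * x) / (2 * sin (π * x))| ≤ 1 / (2 * c * a) := by
  have hsin : ∀ x ∈ Icc a b, 0 < sin (π * x) := fun x hx =>
    sin_pi_mul_pos (ha.trans_le hx.1) (by linarith [hx.2])
  have hg : ∀ x ∈ Icc a b, HasDerivAt (fun y => (2 * sin (π * y))⁻¹)
      (-(2 * (cos (π * x) * π)) / (2 * sin (π * x)) ^ 2) x := by
    intro x hx
    have hlin : HasDerivAt (fun y => π * y) π x := by simpa using (hasDerivAt_id x).const_mul π
    exact (hlin.sin.const_mul 2).inv (by linarith [hsin x hx])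
  have hg'cont : ContinuousOn (fun x => -(2 * (cos (π * x) * π)) / (2 * sin (π * x)) ^ 2)
      (uIcc a b) := by
    rw [uIcc_of_le hab]
    exact ContinuousOn.div (by fun_prop) (by fun_prop) fun x hx =>
      pow_ne_zero 2 (mul_pos two_pos (hsin x hx)).ne'
  have hg'_nonpos : ∀ x ∈ Icc a b, -(2 * (cos (π * x) * π)) / (2 * sin (π * x)) ^ 2 ≤ 0 := by
    intro x hx
    have : 0 ≤ cos (π * x) :=
      cos_nonneg_of_mem_Icc ⟨by nlinarith [pi_pos, hx.1], by nlinarith [pi_pos, hx.2]⟩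
    have := pi_pos
    exact div_nonpos_of_nonpos_of_nonneg (by nlinarith) (sq_nonneg _)
  have hbound := abs_integral_mul_sin_le hab hc hg hg'cont.intervalIntegrable hg'_nonpos
    (inv_nonneg.2 (by linarith [hsin b ⟨hab, le_rfl⟩]))
  simp only [div_eq_inv_mul (sin _)]
  refine hbound.trans ?_
  calc 2 * (2 * sin (π * a))⁻¹ / c = 1 / (c * sin (π * a)) := by field_simp
    _ ≤ 1 / (c * (2 * a)) := by gcongr; exact two_mul_le_sin_pi_mul ha.le (hab.trans hb)
    _ = 1 / (2 * c * a) := by ring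

lemma G_eq_div {n : ℕ} {x : ℝ} (hx0 : 0 < x) (hx1 : x < 1) :
    G n x = sin ((n + 1) * π * x) / sin (π * x) := by
  rw [G, if_neg]
  rintro ⟨m, rfl⟩
  have : (0 : ℤ) < m := by exact_mod_cast hx0
  have : m < 1 := by exact_mod_cast hx1
  omega

noncomputable def hIntegrand (n : ℕ) (x : ℝ) : ℂ :=
  Complex.exp (π * Complex.I * (n + 2) * x) * G n x

lemma Hfun_eq_neg_integral (n : ℕ) (s θ : ℝ) :
    Hfun n s θ = -∫ x in (s - θ)..s, hIntegrand n x := by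
  have : Hfun n s θ = ∫ t in (0 : ℝ)..(-θ), hIntegrand n (s + t) := by
    simp only [Hfun, hIntegrand, Complex.ofReal_add]
  rw [this, integral_comp_add_left, integral_symm, add_zero, sub_eq_add_neg]

lemma re_hIntegrand {n : ℕ} {x : ℝ} (hx0 : 0 < x) (hx1 : x < 1) :
    (hIntegrand n x).re = sin ((2 * n + 3) * π * x) / (2 * sin (π * x)) - 1 / 2 := by
  have hsin := (sin_pi_mul_pos hx0 hx1).ne'
  have hexp : π * Complex.I * (n + 2) * x = ((π * (n + 2) * x : ℝ) : ℂ) * Complex.I := by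
    push_cast; ring
  have hsum := sin_add ((n + 1) * π * x) (π * (n + 2) * x)
  have hdiff := sin_sub ((n + 1) * π * x) (π * (n + 2) * x)
  rw [show (n + 1) * π * x + π * (n + 2) * x = (2 * n + 3) * π * x by ring] at hsum
  rw [show (n + 1) * π * x - π * (n + 2) * x = -(π * x) by ring, sin_neg] at hdiff
  have hprod : cos (π * (n + 2) * x) * sin ((n + 1) * π * x)
      = (sin ((2 * n + 3) * π * x) - sin (π * x)) / 2 := by linarith
  rw [hIntegrand, hexp, G_eq_div hx0 hx1, Complex.re_mul_ofReal, Complex.exp_ofReal_mul_I_re,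
    ← mul_div_assoc, hprod]
  field_simp

lemma continuousOn_hIntegrand (n : ℕ) {a b : ℝ} (ha : 0 < a) (hb : b < 1) :
    ContinuousOn (hIntegrand n) (Icc a b) := by
  have hG : ContinuousOn (G n) (Icc a b) := by
    refine ContinuousOn.congr ?_ fun x hx => G_eq_div (ha.trans_le hx.1) (hx.2.trans_lt hb)
    exact ContinuousOn.div (by fun_prop) (by fun_prop) fun x hx =>
      (sin_pi_mul_pos (ha.trans_le hx.1) (hx.2.trans_lt hb)).ne'
  exact ContinuousOn.mul (by fun_prop) (Complex.continuous_ofReal.comp_continuousOn hG)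

lemma Hfun_re_eq {n : ℕ} {s θ : ℝ} (hθ0 : 0 ≤ θ) (hθs : θ < s) (hs : s < 1) :
    (Hfun n s θ).re =
      θ / 2 - ∫ x in (s - θ)..s, sin ((2 * n + 3) * π * x) / (2 * sin (π * x)) := by
  have ha : 0 < s - θ := by linarith
  have hIcc : uIcc (s - θ) s = Icc (s - θ) s := uIcc_of_le (by linarith)
  have hint : IntervalIntegrable (hIntegrand n) volume (s - θ) s :=
    (hIcc ▸ continuousOn_hIntegrand n ha hs).intervalIntegrable
  have hosc : IntervalIntegrable (fun x => sin ((2 * n + 3) * π * x) / (2 * sin (π * x)))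
      volume (s - θ) s := by
    refine ContinuousOn.intervalIntegrable ?_
    rw [hIcc]
    exact ContinuousOn.div (by fun_prop) (by fun_prop) fun x hx =>
      (mul_pos two_pos (sin_pi_mul_pos (ha.trans_le hx.1) (hx.2.trans_lt hs))).ne'
  rw [Hfun_eq_neg_integral, Complex.neg_re, ← RCLike.re_to_complex, ← intervalIntegral_re hint]
  simp only [RCLike.re_to_complex]
  rw [integral_congr fun x hx => re_hIntegrand (n := n) (ha.trans_le (hIcc ▸ hx).1)
      ((hIcc ▸ hx).2.trans_lt hs),
    integral_sub hosc intervalIntegrable_const, intervalIntegral.integral_const, smul_eq_mul]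
  ring

/-- Bound on the real part of `H(s;θ)` for `0 ≤ θ < s ≤ 1/2`:
`|Re H(s;θ)| ≤ θ/2 + (1/(4(2n+3)))(1/2 + 1/π)(1/s + 1/(s−θ))`. -/
theorem Hfun_re_bound_pos (n : ℕ) (s θ : ℝ)
    (hθ0 : 0 ≤ θ) (hθs : θ < s) (hs : s ≤ 1 / 2) :
    |(Hfun n s θ).re| ≤ θ / 2 +
      (1 / (4 * (2 * (n : ℝ) + 3))) * (1 / 2 + 1 / Real.pi) *
        (1 / s + 1 / (s - θ)) := by
  have ha : 0 < s - θ := by linarith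
  have hN : 0 < 2 * (n : ℝ) + 3 := by positivity
  have hosc := abs_integral_sin_div_sin_pi_mul_le ha (by linarith) hs (mul_pos hN pi_pos)
  have hπ : 1 / π ≤ 1 / 2 := one_div_le_one_div_of_le two_pos two_le_pi
  rw [Hfun_re_eq hθ0 hθs (by linarith)]
  calc _ ≤ |θ / 2| + |∫ x in (s - θ)..s, sin ((2 * n + 3) * π * x) / (2 * sin (π * x))| :=
        abs_sub _ _
    _ ≤ θ / 2 + 1 / (2 * ((2 * n + 3) * π) * (s - θ)) := by
        rw [abs_of_nonneg (by linarith)]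
        gcongr
    _ = θ / 2 + 1 / (4 * (2 * n + 3)) * (1 / π + 1 / π) * (0 + 1 / (s - θ)) := by
        field_simp; ring
    _ ≤ θ / 2 + 1 / (4 * (2 * n + 3)) * (1 / 2 + 1 / π) * (1 / s + 1 / (s - θ)) := by
        gcongr
        exact one_div_nonneg.2 (by linarith)
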